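/- arXiv:2303.11876 — 2 statements merged into one kernel-verified Lean document; each statement's English description precedes it below -/
import Mathlib

section
/- From rational to polynomial SDEs: let K be a field of characteristic 0, let f₁,...,fₙ and g be polynomials in the variables x, y₀₁,...,y₀ₙ, y₁,...,yₙ with coefficients in K, and let r₀ = (r₀₁,...,r₀ₙ) ∈ Kⁿ be such that g(0, r₀, r₀) ≠ 0. Then there exists a polynomial h in the variables x, y₀₁,...,y₀ₙ, y₁,...,yₙ, w with coefficients in K (independent of any particular stream) such that: (i) for every tuple of streams σ = (σ₁,...,σₙ) satisfying σᵢ' = fᵢ(X, r₀, σ) · g(X, r₀, σ)⁻¹ and σᵢ(0) = r₀ᵢ for all i, the tuple (σ, τ) with τ := g(X, r₀, σ)⁻¹ is the unique tuple of streams satisfying σᵢ' = fᵢ(X, r₀, σ) · τ, σᵢ(0) = r₀ᵢ for all i, together with τ' = −g(0, r₀, r₀)⁻¹ · h(X, r₀, σ, τ) · τ and τ(0) = g(0, r₀, r₀)⁻¹; and (ii) conversely, for any tuple of streams (σ, τ) satisfying this polynomial system, σ satisfies σᵢ' = fᵢ(X, r₀, σ) · g(X, r₀, σ)⁻¹ and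 σᵢ(0) = r₀ᵢ for all i. -/
/-- Stream derivative: remove the first coefficient. -/
noncomputable def sderiv {K : Type*} [Field K] (σ : PowerSeries K) : PowerSeries K :=
  PowerSeries.mk fun k => PowerSeries.coeff (k + 1) σ

/-- Variable set `x, y₀₁,...,y₀ₙ, y₁,...,yₙ`. -/
abbrev VarV (n : ℕ) := Unit ⊕ (Fin n ⊕ Fin n)

/-- Variable set `x, y₀₁,...,y₀ₙ, y₁,...,yₙ, w`. -/
abbrev VarW (n : ℕ) := VarV n ⊕ Unit

/-- Evaluation of a polynomial in `x, y₀, y` at `x := X`, `y₀ᵢ := C r₀ᵢ`, `yᵢ := σᵢ`. -/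
noncomputable def evalV {K : Type*} [Field K] {n : ℕ}
    (f : MvPolynomial (VarV n) K) (r0 : Fin n → K) (σ : Fin n → PowerSeries K) :
    PowerSeries K :=
  MvPolynomial.aeval
    (Sum.elim (fun _ => PowerSeries.X)
      (Sum.elim (fun i => PowerSeries.C (r0 i)) σ)) f

/-- Evaluation of a polynomial in `x, y₀, y` at `x := 0`, `y₀ᵢ := r₀ᵢ`, `yᵢ := r₀ᵢ` in `K`. -/
noncomputable def evalVK {K : Type*} [Field K] {n : ℕ}
    (f : MvPolynomial (VarV n) K) (r0 : Fin n → K) : K :=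
  MvPolynomial.eval (Sum.elim (fun _ => (0 : K)) (Sum.elim r0 r0)) f

/-- Evaluation of a polynomial in `x, y₀, y, w` at `x := X`, `y₀ᵢ := C r₀ᵢ`, `yᵢ := σᵢ`,
`w := τ`. -/
noncomputable def evalW {K : Type*} [Field K] {n : ℕ}
    (h : MvPolynomial (VarW n) K) (r0 : Fin n → K) (σ : Fin n → PowerSeries K)
    (τ : PowerSeries K) : PowerSeries K :=
  MvPolynomial.aeval
    (Sum.elim
      (Sum.elim (fun _ => PowerSeries.X)
        (Sum.elim (fun i => PowerSeries.C (r0 i)) σ))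
      (fun _ => τ)) h

/-- The polynomial SDE system `σᵢ' = fᵢ(X,r₀,σ)·τ, σᵢ(0) = r₀ᵢ,
`τ' = -g(0,r₀,r₀)⁻¹ · h(X,r₀,σ,τ) · τ`, `τ(0) = g(0,r₀,r₀)⁻¹`. -/
def PolySys {K : Type*} [Field K] {n : ℕ}
    (f : Fin n → MvPolynomial (VarV n) K) (g : MvPolynomial (VarV n) K)
    (h : MvPolynomial (VarW n) K) (r0 : Fin n → K)
    (σ : Fin n → PowerSeries K) (τ : PowerSeries K) : Prop :=
  (∀ i, sderiv (σ i) = evalV (f i) r0 σ * τ ∧ PowerSeries.coeff 0 (σ i) = r0 i) ∧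
  sderiv τ = PowerSeries.C (-(evalVK g r0)⁻¹) * evalW h r0 σ τ * τ ∧
  PowerSeries.coeff 0 τ = (evalVK g r0)⁻¹

/-! Write `G := g(X, r₀, σ)`. The polynomial `g - g(0, r₀, r₀)` lies in the ideal generated by
`x`, the `y₀ᵢ - r₀ᵢ` and the `yᵢ - r₀ᵢ`; along a solution `y₀ᵢ - r₀ᵢ` evaluates to `0` and
`yᵢ - r₀ᵢ` to `σᵢ - r₀ᵢ = X σᵢ' = X fᵢ(σ) τ`, so `X G' = G - G(0) = X h(σ, τ)` for a polynomial `h`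
that does not depend on `σ`. Since `(G τ)' = G' τ + G(0) τ'`, a stream `τ` is `G⁻¹` exactly when
`τ(0) = G(0)⁻¹` and `τ' = -G(0)⁻¹ G' τ = -G(0)⁻¹ h(σ, τ) τ`. Solutions of the polynomial system
are unique because its right-hand sides are causal: streams agreeing modulo `Xᵏ` have derivatives
agreeing modulo `Xᵏ`, hence agree modulo `Xᵏ⁺¹`. -/

theorem MvPolynomial.dvd_aeval_sub_aeval {R S ι : Type*} [CommRing R] [CommRing S] [Algebra R S]
    {d : S} {v w : ι → S} (h : ∀ j, d ∣ v j - w j) (p : MvPolynomial ι R) :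
    d ∣ aeval v p - aeval w p := by
  have hmk : ∀ a b : S, d ∣ a - b ↔
      Ideal.Quotient.mkₐ R (Ideal.span {d}) a = Ideal.Quotient.mkₐ R (Ideal.span {d}) b := by
    intro a b
    rw [Ideal.Quotient.mkₐ_eq_mk, Ideal.Quotient.eq, Ideal.mem_span_singleton]
  have hvw : (fun j => Ideal.Quotient.mkₐ R (Ideal.span {d}) (v j)) =
      fun j => Ideal.Quotient.mkₐ R (Ideal.span {d}) (w j) := by
    funext j
    exact (hmk _ _).mp (h j)
  rw [hmk, MvPolynomial.comp_aeval_apply, MvPolynomial.comp_aeval_apply, hvw]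

theorem MvPolynomial.sub_C_eval_mem_span_X_sub_C {R ι : Type*} [CommRing R] (a : ι → R)
    (p : MvPolynomial ι R) :
    p - C (eval a p) ∈ Ideal.span (Set.range fun i => X i - C (a i)) := by
  set I := Ideal.span (Set.range fun i => (X i - C (a i) : MvPolynomial ι R))
  have hφ : Ideal.Quotient.mkₐ R I =
      (Ideal.Quotient.mkₐ R I).comp ((Algebra.ofId R _).comp (aeval a)) := by
    refine MvPolynomial.algHom_ext fun i => ?_
    simp only [AlgHom.comp_apply, aeval_X, Ideal.Quotient.mkₐ_eq_mk]
    rw [Ideal.Quotient.eq]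
    exact Ideal.subset_span ⟨i, rfl⟩
  rw [← Ideal.Quotient.eq]
  simpa using congr($hφ p)

open PowerSeries

section StreamCalculus

variable {K : Type*} [Field K]

@[simp]
theorem coeff_sderiv (σ : K⟦X⟧) (k : ℕ) : coeff k (sderiv σ) = coeff (k + 1) σ := by
  simp [sderiv]

theorem sderiv_sub (σ τ : K⟦X⟧) : sderiv (σ - τ) = sderiv σ - sderiv τ := by
  ext k; simp

@[simp]
theorem sderiv_one : sderiv (1 : K⟦X⟧) = 0 := by
  ext k; simp [coeff_one]

theorem C_constantCoeff_add_X_mul_sderiv (σ : K⟦X⟧) : C (constantCoeff σ) + X * sderiv σ = σ := by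
  ext (_ | k) <;> simp [coeff_succ_X_mul]

theorem eq_iff_constantCoeff_eq_and_sderiv_eq {σ τ : K⟦X⟧} :
    σ = τ ↔ constantCoeff σ = constantCoeff τ ∧ sderiv σ = sderiv τ := by
  refine ⟨fun h => h ▸ ⟨rfl, rfl⟩, fun ⟨h0, h'⟩ => ?_⟩
  rw [← C_constantCoeff_add_X_mul_sderiv σ, ← C_constantCoeff_add_X_mul_sderiv τ, h0, h']

theorem sderiv_mul (σ τ : K⟦X⟧) :
    sderiv (σ * τ) = sderiv σ * τ + C (constantCoeff σ) * sderiv τ := by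
  apply mul_left_cancel₀ (X_ne_zero (R := K))
  have hσ := C_constantCoeff_add_X_mul_sderiv σ
  have hτ := C_constantCoeff_add_X_mul_sderiv τ
  have hστ := C_constantCoeff_add_X_mul_sderiv (σ * τ)
  rw [map_mul, map_mul] at hστ
  linear_combination hστ - τ * hσ - C (constantCoeff σ) * hτ

theorem eq_inv_iff_sderiv {G τ : K⟦X⟧} (hG : constantCoeff G ≠ 0) :
    τ = G⁻¹ ↔ constantCoeff τ = (constantCoeff G)⁻¹ ∧
      sderiv τ = C (-(constantCoeff G)⁻¹) * sderiv G * τ := by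
  rw [eq_inv_iff_mul_eq_one hG, mul_comm, eq_iff_constantCoeff_eq_and_sderiv_eq, sderiv_mul,
    sderiv_one, map_mul, map_one]
  have hC : C (constantCoeff G) * C (constantCoeff G)⁻¹ = (1 : K⟦X⟧) := by
    rw [← map_mul, mul_inv_cancel₀ hG, map_one]
  constructor
  · rintro ⟨h0, h'⟩
    refine ⟨by field_simp; linear_combination h0, ?_⟩
    rw [map_neg]
    linear_combination C (constantCoeff G)⁻¹ * h' - sderiv τ * hC
  · rintro ⟨h0, h'⟩
    refine ⟨by rw [h0, mul_inv_cancel₀ hG], ?_⟩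
    rw [h', map_neg]
    linear_combination (-(sderiv G * τ)) * hC

theorem eq_of_sderiv_dvd {ι : Type*} {v w : ι → K⟦X⟧}
    (h0 : ∀ i, constantCoeff (v i) = constantCoeff (w i))
    (h' : ∀ k, (∀ j, X ^ k ∣ v j - w j) → ∀ i, X ^ k ∣ sderiv (v i) - sderiv (w i)) :
    v = w := by
  have hdvd : ∀ k j, (X : K⟦X⟧) ^ k ∣ v j - w j := by
    intro k
    induction k with
    | zero => simp
    | succ k ih =>
      intro j
      have hX : v j - w j = X * (sderiv (v j) - sderiv (w j)) := by
        have h := C_constantCoeff_add_X_mul_sderiv (v j - w j)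
        rwa [map_sub, h0 j, sub_self, map_zero, zero_add, sderiv_sub, eq_comm] at h
      rw [hX, pow_succ']
      exact mul_dvd_mul_left X (h' k ih j)
  funext j
  rw [← sub_eq_zero]
  ext m
  simpa using X_pow_dvd_iff.mp (hdvd (m + 1) j) m m.lt_succ_self

end StreamCalculus

section PolynomialSDE

variable {K : Type*} [Field K] {n : ℕ}

theorem constantCoeff_evalV (p : MvPolynomial (VarV n) K) {r0 : Fin n → K}
    {σ : Fin n → K⟦X⟧} (hσ : ∀ i, coeff 0 (σ i) = r0 i) :
    constantCoeff (evalV p r0 σ) = evalVK p r0 := by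
  rw [evalV, evalVK, MvPolynomial.aeval_def, MvPolynomial.eval, MvPolynomial.eval₂_comp_left]
  congr 1
  funext j
  rcases j with _ | i | i <;> simp [← hσ]

@[simp]
theorem evalW_rename_inl (p : MvPolynomial (VarV n) K) (r0 : Fin n → K) (σ : Fin n → K⟦X⟧)
    (τ : K⟦X⟧) : evalW (MvPolynomial.rename Sum.inl p) r0 σ τ = evalV p r0 σ := by
  simp [evalW, evalV, MvPolynomial.aeval_rename]

theorem dvd_evalV_sub_evalV {d : K⟦X⟧} (p : MvPolynomial (VarV n) K) (r0 : Fin n → K)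
    {σ₁ σ₂ : Fin n → K⟦X⟧} (hσ : ∀ i, d ∣ σ₁ i - σ₂ i) :
    d ∣ evalV p r0 σ₁ - evalV p r0 σ₂ :=
  MvPolynomial.dvd_aeval_sub_aeval (by rintro (_ | i | i) <;> simp [hσ]) p

theorem dvd_evalW_sub_evalW {d : K⟦X⟧} (p : MvPolynomial (VarW n) K) (r0 : Fin n → K)
    {σ₁ σ₂ : Fin n → K⟦X⟧} {τ₁ τ₂ : K⟦X⟧} (hσ : ∀ i, d ∣ σ₁ i - σ₂ i) (hτ : d ∣ τ₁ - τ₂) :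
    d ∣ evalW p r0 σ₁ τ₁ - evalW p r0 σ₂ τ₂ :=
  MvPolynomial.dvd_aeval_sub_aeval (by rintro ((_ | i | i) | _) <;> simp [hσ, hτ]) p

theorem PolySys.unique {f : Fin n → MvPolynomial (VarV n) K} {g : MvPolynomial (VarV n) K}
    {h : MvPolynomial (VarW n) K} {r0 : Fin n → K} {σ₁ σ₂ : Fin n → K⟦X⟧} {τ₁ τ₂ : K⟦X⟧}
    (H₁ : PolySys f g h r0 σ₁ τ₁) (H₂ : PolySys f g h r0 σ₂ τ₂) : σ₁ = σ₂ ∧ τ₁ = τ₂ := by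
  have hvw := eq_of_sderiv_dvd (v := fun o : Option (Fin n) => o.elim τ₁ σ₁)
    (w := fun o => o.elim τ₂ σ₂) ?_ ?_
  · exact ⟨funext fun i => congr_fun hvw (some i), congr_fun hvw none⟩
  · rintro (_ | i)
    · simp [← coeff_zero_eq_constantCoeff_apply, H₁.2.2, H₂.2.2]
    · simp [← coeff_zero_eq_constantCoeff_apply, (H₁.1 i).2, (H₂.1 i).2]
  · intro k hk
    have hσ : ∀ i, X ^ k ∣ σ₁ i - σ₂ i := fun i => hk (some i)
    have hτ : X ^ k ∣ τ₁ - τ₂ := hk none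
    rintro (_ | i)
    · simp only [Option.elim, H₁.2.1, H₂.2.1, mul_assoc, ← mul_sub]
      exact dvd_mul_of_dvd_right (dvd_mul_sub_mul (dvd_evalW_sub_evalW h r0 hσ hτ) hτ) _
    · simp only [Option.elim, (H₁.1 i).1, (H₂.1 i).1]
      exact dvd_mul_sub_mul (dvd_evalV_sub_evalV (f i) r0 hσ) hτ

theorem exists_sderiv_evalV_eq_evalW (f : Fin n → MvPolynomial (VarV n) K)
    (g : MvPolynomial (VarV n) K) (r0 : Fin n → K) :
    ∃ h : MvPolynomial (VarW n) K, ∀ σ τ,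
      (∀ i, sderiv (σ i) = evalV (f i) r0 σ * τ ∧ coeff 0 (σ i) = r0 i) →
      sderiv (evalV g r0 σ) = evalW h r0 σ τ := by
  classical
  set a : VarV n → K := Sum.elim (fun _ => 0) (Sum.elim r0 r0)
  obtain ⟨c, hc⟩ := Ideal.mem_span_range_iff_exists_fun.mp
    (MvPolynomial.sub_C_eval_mem_span_X_sub_C a g)
  -- `D j` is the polynomial that `(X j - C (a j)) / x` becomes along a solution.
  let D : VarV n → MvPolynomial (VarW n) K :=
    Sum.elim (fun _ => 1) (Sum.elim 0 fun i =>
      MvPolynomial.rename Sum.inl (f i) * MvPolynomial.X (Sum.inr ()))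
  refine ⟨∑ j, MvPolynomial.rename Sum.inl (c j) * D j, fun σ τ hσ => ?_⟩
  have hD : ∀ j,
      evalV (MvPolynomial.X j - MvPolynomial.C (a j)) r0 σ = X * evalW (D j) r0 σ τ := by
    rintro (_ | i | i)
    · simp [evalV, evalW, D, a]
    · simp [evalV, evalW, D, a]
    · have := C_constantCoeff_add_X_mul_sderiv (σ i)
      rw [(hσ i).1, ← coeff_zero_eq_constantCoeff_apply, (hσ i).2] at this
      simp [evalV, evalW, D, a, ← this, MvPolynomial.aeval_rename]
  apply mul_left_cancel₀ (X_ne_zero (R := K))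
  calc X * sderiv (evalV g r0 σ) = evalV g r0 σ - C (evalVK g r0) := by
        rw [← constantCoeff_evalV g fun i => (hσ i).2, eq_sub_iff_add_eq']
        exact C_constantCoeff_add_X_mul_sderiv _
    _ = evalV (∑ j, c j * (MvPolynomial.X j - MvPolynomial.C (a j))) r0 σ := by
        rw [hc]; simp [evalV, evalVK, a]
    _ = X * evalW (∑ j, MvPolynomial.rename Sum.inl (c j) * D j) r0 σ τ := by
        simp only [evalV, evalW] at hD ⊢
        simp only [map_sum, map_mul, Finset.mul_sum, hD, MvPolynomial.aeval_rename,
          Sum.elim_comp_inl, mul_left_comm]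

end PolynomialSDE

theorem rational_to_polynomial_SDE_general {K : Type*} [Field K] {n : ℕ}
    (f : Fin n → MvPolynomial (VarV n) K) (g : MvPolynomial (VarV n) K)
    (r0 : Fin n → K) (hg : evalVK g r0 ≠ 0) :
    ∃ h : MvPolynomial (VarW n) K,
      (∀ σ : Fin n → PowerSeries K,
        (∀ i, sderiv (σ i) = evalV (f i) r0 σ * (evalV g r0 σ)⁻¹ ∧
              PowerSeries.coeff 0 (σ i) = r0 i) →
        (PolySys f g h r0 σ (evalV g r0 σ)⁻¹ ∧
          ∀ (σ₂ : Fin n → PowerSeries K) (τ₂ : PowerSeries K),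
            PolySys f g h r0 σ₂ τ₂ → σ₂ = σ ∧ τ₂ = (evalV g r0 σ)⁻¹)) ∧
      (∀ (σ : Fin n → PowerSeries K) (τ : PowerSeries K),
        PolySys f g h r0 σ τ →
        ∀ i, sderiv (σ i) = evalV (f i) r0 σ * (evalV g r0 σ)⁻¹ ∧
             PowerSeries.coeff 0 (σ i) = r0 i) := by
  obtain ⟨h, hh⟩ := exists_sderiv_evalV_eq_evalW f g r0
  have eq_inv_iff_polySys : ∀ σ τ,
      (∀ i, sderiv (σ i) = evalV (f i) r0 σ * τ ∧ coeff 0 (σ i) = r0 i) →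
      (τ = (evalV g r0 σ)⁻¹ ↔ PolySys f g h r0 σ τ) := by
    intro σ τ hσ
    have h0 := constantCoeff_evalV g fun i => (hσ i).2
    rw [eq_inv_iff_sderiv (h0 ▸ hg), PolySys, h0, hh σ τ hσ, ← coeff_zero_eq_constantCoeff_apply]
    exact ⟨fun hτ => ⟨hσ, hτ.2, hτ.1⟩, fun H => ⟨H.2.2, H.2.1⟩⟩
  refine ⟨h, fun σ hσ => ?_, fun σ τ H i => ?_⟩
  · have hP := (eq_inv_iff_polySys σ _ hσ).mp rfl
    exact ⟨hP, fun σ₂ τ₂ H₂ => H₂.unique hP⟩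
  · rw [← (eq_inv_iff_polySys σ τ H.1).mpr H]
    exact H.1 i

/-- From rational to polynomial SDEs. -/
theorem rational_to_polynomial_SDE {K : Type*} [Field K] [CharZero K] {n : ℕ}
    (f : Fin n → MvPolynomial (VarV n) K) (g : MvPolynomial (VarV n) K)
    (r0 : Fin n → K) (hg : evalVK g r0 ≠ 0) :
    ∃ h : MvPolynomial (VarW n) K,
      (∀ σ : Fin n → PowerSeries K,
        (∀ i, sderiv (σ i) = evalV (f i) r0 σ * (evalV g r0 σ)⁻¹ ∧
              PowerSeries.coeff 0 (σ i) = r0 i) →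
        (PolySys f g h r0 σ (evalV g r0 σ)⁻¹ ∧
          ∀ (σ₂ : Fin n → PowerSeries K) (τ₂ : PowerSeries K),
            PolySys f g h r0 σ₂ τ₂ → σ₂ = σ ∧ τ₂ = (evalV g r0 σ)⁻¹)) ∧
      (∀ (σ : Fin n → PowerSeries K) (τ : PowerSeries K),
        PolySys f g h r0 σ τ →
        ∀ i, sderiv (σ i) = evalV (f i) r0 σ * (evalV g r0 σ)⁻¹ ∧
             PowerSeries.coeff 0 (σ i) = r0 i) :=
  rational_to_polynomial_SDE_general f g r0 hg
end

section
/- Guarded polynomial systems have unique stream solutions given by the associated SDEs: let K be a field of characteristic 0, let p₁,...,pₙ be polynomials in the variables x, y₁, ..., yₙ with coefficients in K and c = (c₁,...,cₙ) ∈ Kⁿ. Then there exists a unique tuple of streams σ = (σ₁,...,σₙ) over K such that σᵢ = C(cᵢ) + X · pᵢ(X, σ) for every i; moreover this σ is the unique tuple of streams satisfying σᵢ(0) = cᵢ and σᵢ' = pᵢ(X, σ) for every i. -/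
/-- Evaluation of a polynomial in `x, y₁, ..., yₙ` (variable `0` playing the role of `x`)
at `x := X` and `yᵢ := σᵢ`. -/
noncomputable def polyEval {K : Type*} [Field K] {n : ℕ}
    (p : MvPolynomial (Fin (n + 1)) K) (σ : Fin n → PowerSeries K) : PowerSeries K :=
  MvPolynomial.aeval (Fin.cons PowerSeries.X σ) p

open PowerSeries

theorem MvPolynomial.aeval_sub_aeval_mem {R S ι : Type*} [CommSemiring R] [CommRing S]
    [Algebra R S] {I : Ideal S} {a b : ι → S} (h : ∀ i, a i - b i ∈ I)
    (q : MvPolynomial ι R) : aeval a q - aeval b q ∈ I := by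
  rw [← Ideal.Quotient.eq, ← Ideal.Quotient.mkₐ_eq_mk R, comp_aeval_apply, comp_aeval_apply]
  congr 2 with i
  simpa only [Ideal.Quotient.mkₐ_eq_mk] using Ideal.Quotient.eq.mpr (h i)

theorem X_pow_dvd_polyEval_sub {K : Type*} [Field K] {n m : ℕ} (q : MvPolynomial (Fin (n + 1)) K)
    {σ τ : Fin n → K⟦X⟧} (h : ∀ i, X ^ m ∣ σ i - τ i) :
    X ^ m ∣ polyEval q σ - polyEval q τ := by
  simp only [← Ideal.mem_span_singleton] at h ⊢
  refine MvPolynomial.aeval_sub_aeval_mem (fun i => ?_) q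
  cases i using Fin.cases with
  | zero => simp
  | succ i => simpa using h i

namespace PowerSeries

variable {R : Type*} [CommRing R]

theorem eq_of_forall_X_pow_dvd_sub {φ ψ : R⟦X⟧} (h : ∀ m, X ^ m ∣ φ - ψ) : φ = ψ := by
  rw [← sub_eq_zero]
  ext m
  exact X_pow_dvd_iff.mp (h (m + 1)) m m.lt_succ_self

theorem coeff_eq_of_X_pow_dvd_sub {φ ψ : R⟦X⟧} {m n : ℕ} (h : X ^ n ∣ φ - ψ) (hm : m < n) :
    coeff m φ = coeff m ψ :=
  sub_eq_zero.mp (by simpa using X_pow_dvd_iff.mp h m hm)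

/-- A contraction for the `X`-adic metric on tuples of power series. -/
def IsXAdicContraction {ι : Type*} (Φ : (ι → R⟦X⟧) → ι → R⟦X⟧) : Prop :=
  ∀ m σ τ, (∀ i, X ^ m ∣ σ i - τ i) → ∀ i, X ^ (m + 1) ∣ Φ σ i - Φ τ i

variable {ι : Type*} {Φ : (ι → R⟦X⟧) → ι → R⟦X⟧}

theorem IsXAdicContraction.eq_of_isFixedPt (hΦ : IsXAdicContraction Φ) {σ τ : ι → R⟦X⟧}
    (hσ : Function.IsFixedPt Φ σ) (hτ : Function.IsFixedPt Φ τ) : σ = τ := by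
  have h (m : ℕ) (i : ι) : X ^ m ∣ σ i - τ i := by
    induction m generalizing i with
    | zero => simp
    | succ m ih => rw [← hσ, ← hτ]; exact hΦ m σ τ ih i
  exact funext fun i => eq_of_forall_X_pow_dvd_sub fun m => h m i

theorem IsXAdicContraction.exists_isFixedPt (hΦ : IsXAdicContraction Φ) :
    ∃ σ, Function.IsFixedPt Φ σ := by
  set f : ℕ → ι → R⟦X⟧ := fun k => Φ^[k] 0
  have hf_succ (k : ℕ) : f (k + 1) = Φ (f k) := Function.iterate_succ_apply' Φ k 0
  have hf_agree (k j : ℕ) (i : ι) : X ^ k ∣ f (k + j) i - f k i := by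
    induction k generalizing i with
    | zero => simp
    | succ k ih => rw [Nat.add_right_comm, hf_succ, hf_succ]; exact hΦ _ _ _ ih i
  set σ : ι → R⟦X⟧ := fun i => mk fun m => coeff m (f (m + 1) i)
  have hσ (N : ℕ) (i : ι) : X ^ N ∣ σ i - f N i := by
    refine X_pow_dvd_iff.mpr fun m hm => ?_
    have hN : m + 1 + (N - (m + 1)) = N := by omega
    have := hf_agree (m + 1) (N - (m + 1)) i
    rw [hN] at this
    rw [map_sub, sub_eq_zero, coeff_mk]
    exact (coeff_eq_of_X_pow_dvd_sub this m.lt_succ_self).symm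
  refine ⟨σ, funext fun i => eq_of_forall_X_pow_dvd_sub fun N => ?_⟩
  have hΦσ : X ^ (N + 1) ∣ Φ σ i - f (N + 1) i := by rw [hf_succ]; exact hΦ N _ _ (hσ N) i
  have : X ^ (N + 1) ∣ Φ σ i - σ i := by simpa using dvd_sub hΦσ (hσ (N + 1) i)
  exact (pow_dvd_pow X N.le_succ).trans this

theorem IsXAdicContraction.existsUnique_isFixedPt (hΦ : IsXAdicContraction Φ) :
    ∃! σ, Function.IsFixedPt Φ σ :=
  let ⟨σ, hσ⟩ := hΦ.exists_isFixedPt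
  ⟨σ, hσ, fun _ hτ => hΦ.eq_of_isFixedPt hτ hσ⟩

theorem eq_C_add_X_mul_iff {φ ψ : R⟦X⟧} {a : R} :
    φ = C a + X * ψ ↔ coeff 0 φ = a ∧ (mk fun k => coeff (k + 1) φ) = ψ := by
  constructor
  · rintro rfl
    refine ⟨by simp, ?_⟩
    ext k
    simp [coeff_succ_X_mul]
  · rintro ⟨rfl, rfl⟩
    rw [add_comm, coeff_zero_eq_constantCoeff_apply]
    exact eq_X_mul_shift_add_const φ

end PowerSeries

theorem guarded_system_unique_solution_general {K : Type*} [Field K] {n : ℕ}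
    (p : Fin n → MvPolynomial (Fin (n + 1)) K) (c : Fin n → K) :
    ∃ σ : Fin n → PowerSeries K,
      ((∀ i, σ i = PowerSeries.C (c i) + PowerSeries.X * polyEval (p i) σ) ∧
        ∀ σ₂ : Fin n → PowerSeries K,
          (∀ i, σ₂ i = PowerSeries.C (c i) + PowerSeries.X * polyEval (p i) σ₂) →
          σ₂ = σ) ∧
      ((∀ i, PowerSeries.coeff 0 (σ i) = c i ∧ sderiv (σ i) = polyEval (p i) σ) ∧
        ∀ σ₂ : Fin n → PowerSeries K,
          (∀ i, PowerSeries.coeff 0 (σ₂ i) = c i ∧ sderiv (σ₂ i) = polyEval (p i) σ₂) →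
          σ₂ = σ) := by
  set Φ : (Fin n → K⟦X⟧) → Fin n → K⟦X⟧ := fun σ i => C (c i) + X * polyEval (p i) σ
  have hΦ : IsXAdicContraction Φ := fun m σ τ h i => by
    simpa [Φ, pow_succ', mul_sub] using mul_dvd_mul_left X (X_pow_dvd_polyEval_sub (p i) h)
  have guarded_iff_ivp (σ : Fin n → K⟦X⟧) (i : Fin n) :
      σ i = C (c i) + X * polyEval (p i) σ ↔
        coeff 0 (σ i) = c i ∧ sderiv (σ i) = polyEval (p i) σ :=
    eq_C_add_X_mul_iff
  have isFixedPt_iff (σ : Fin n → K⟦X⟧) :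
      Function.IsFixedPt Φ σ ↔ ∀ i, σ i = C (c i) + X * polyEval (p i) σ :=
    funext_iff.trans (forall_congr' fun _ => eq_comm)
  obtain ⟨σ, hσ, huniq⟩ := hΦ.existsUnique_isFixedPt
  have hσ' := (isFixedPt_iff σ).mp hσ
  refine ⟨σ, ⟨hσ', fun τ hτ => huniq τ ((isFixedPt_iff τ).mpr hτ)⟩,
    fun i => (guarded_iff_ivp σ i).mp (hσ' i), fun τ hτ => huniq τ ?_⟩
  exact (isFixedPt_iff τ).mpr fun i => (guarded_iff_ivp τ i).mpr (hτ i)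

/-- Guarded polynomial systems have unique stream solutions, given by the
associated SDE initial value problem. -/
theorem guarded_system_unique_solution {K : Type*} [Field K] [CharZero K] {n : ℕ}
    (p : Fin n → MvPolynomial (Fin (n + 1)) K) (c : Fin n → K) :
    ∃ σ : Fin n → PowerSeries K,
      ((∀ i, σ i = PowerSeries.C (c i) + PowerSeries.X * polyEval (p i) σ) ∧
        ∀ σ₂ : Fin n → PowerSeries K,
          (∀ i, σ₂ i = PowerSeries.C (c i) + PowerSeries.X * polyEval (p i) σ₂) →
          σ₂ = σ) ∧
      ((∀ i, PowerSeries.coeff 0 (σ i) = c i ∧ sderiv (σ i) = polyEval (p i) σ) ∧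
        ∀ σ₂ : Fin n → PowerSeries K,
          (∀ i, PowerSeries.coeff 0 (σ₂ i) = c i ∧ sderiv (σ₂ i) = polyEval (p i) σ₂) →
          σ₂ = σ) :=
  guarded_system_unique_solution_general p c
end
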